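/- arXiv:0909.5130 — 3 statements merged into one kernel-verified Lean document; each statement's English description precedes it below -/
import Mathlib

section
/- Let φ be a non-negative non-increasing function on (0,∞) with ∫₀^∞ φ(u) u^{-1/2} du < ∞. Then lim_{t→∞} √t ∫₀^t φ(u) (u(t−u))^{-1/2} du = ∫₀^∞ φ(u) u^{-1/2} du. -/
/-!
With `f u = φ u / √u`, the integrand is `f u * √t / √(t - u)`. On `(0, t/2)` the weight
`√t / √(t - u)` is at most `√2` and tends to `1`, so dominated convergence gives `∫ f`.
On `[t/2, t)` monotonicity bounds the integrand by `√2 φ(t/2) / √(t - u)`, whose integral is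
`2√2 φ(t/2) √(t/2)`; monotonicity again gives `φ(s) √s ≤ 2 ∫_{s/2}^s f`, and this tends to `0`
because `f` is integrable at infinity.
-/

open MeasureTheory Filter Set Topology

theorem Real.sqrt_div_sqrt_le_sqrt_two {a b : ℝ} (h : a ≤ 2 * b) : √a / √b ≤ √2 := by
  refine div_le_of_le_mul₀ (Real.sqrt_nonneg _) (Real.sqrt_nonneg _) ?_
  rw [← Real.sqrt_mul zero_le_two]
  exact Real.sqrt_le_sqrt h

theorem Real.inv_sqrt_eq_rpow {x : ℝ} (hx : 0 ≤ x) : (√x)⁻¹ = x ^ (-(1 / 2) : ℝ) := by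
  rw [Real.rpow_neg hx, Real.sqrt_eq_rpow]

theorem integral_inv_sqrt_sub {a b : ℝ} (hab : a ≤ b) :
    ∫ u in a..b, (√(b - u))⁻¹ = 2 * √(b - a) := by
  have hrpow : EqOn (fun x : ℝ => (√x)⁻¹) (fun x => x ^ (-(1 / 2) : ℝ)) (uIcc 0 (b - a)) :=
    fun x hx => Real.inv_sqrt_eq_rpow (uIcc_of_le (sub_nonneg.2 hab) ▸ hx).1
  rw [intervalIntegral.integral_comp_sub_left (fun x => (√x)⁻¹), sub_self,
    intervalIntegral.integral_congr hrpow, integral_rpow (by norm_num), Real.sqrt_eq_rpow]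
  norm_num
  ring

theorem integrableOn_Ico_inv_sqrt_sub {a b : ℝ} (hab : a ≤ b) :
    IntegrableOn (fun u => (√(b - u))⁻¹) (Ico a b) := by
  have hrpow : IntervalIntegrable (fun x : ℝ => x ^ (-(1 / 2) : ℝ)) volume 0 (b - a) :=
    intervalIntegral.intervalIntegrable_rpow' (by norm_num)
  have hsqrt : IntervalIntegrable (fun x : ℝ => (√x)⁻¹) volume 0 (b - a) :=
    hrpow.congr_uIoo fun x hx =>
      (Real.inv_sqrt_eq_rpow (uIoo_of_le (sub_nonneg.2 hab) ▸ hx).1.le).symm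
  exact (intervalIntegrable_iff_integrableOn_Ico_of_le hab).1
    (by simpa using (hsqrt.comp_sub_left b).symm)

theorem tendsto_intervalIntegral_zero_of_tendsto_atTop {ι E : Type*} [NormedAddCommGroup E]
    [NormedSpace ℝ E] [CompleteSpace E] {l : Filter ι} [l.IsCountablyGenerated] {f : ℝ → E}
    {a : ℝ} (hf : IntegrableOn f (Ioi a)) {b c : ι → ℝ}
    (hb : Tendsto b l atTop) (hc : Tendsto c l atTop) :
    Tendsto (fun i => ∫ u in b i..c i, f u) l (𝓝 0) := by
  have hIoc : ∀ x, a ≤ x → IntervalIntegrable f volume a x := fun x hx =>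
    (intervalIntegrable_iff_integrableOn_Ioc_of_le hx).2 (hf.mono_set Ioc_subset_Ioi_self)
  rw [← sub_self (∫ u in Ioi a, f u)]
  refine ((intervalIntegral_tendsto_integral_Ioi a hf hc).sub
    (intervalIntegral_tendsto_integral_Ioi a hf hb)).congr' ?_
  filter_upwards [hb.eventually_ge_atTop a, hc.eventually_ge_atTop a] with i hbi hci
  exact intervalIntegral.integral_interval_sub_left (hIoc _ hci) (hIoc _ hbi)

theorem AntitoneOn.mul_sqrt_le_two_mul_setIntegral_div_sqrt {φ : ℝ → ℝ}
    (hanti : AntitoneOn φ (Ioi 0)) {s : ℝ} (hs : 0 < s) (hφs : 0 ≤ φ s)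
    (hint : IntegrableOn (fun u => φ u / √u) (Ioc (s / 2) s)) :
    φ s * √s ≤ 2 * ∫ u in Ioc (s / 2) s, φ u / √u := by
  have hle : ∀ u ∈ Ioc (s / 2) s, φ s / √s ≤ φ u / √u := fun u hu => by
    have hu0 : 0 < u := by linarith [hu.1]
    exact div_le_div₀ (hφs.trans (hanti hu0 hs hu.2)) (hanti hu0 hs hu.2)
      (Real.sqrt_pos.2 hu0) (Real.sqrt_le_sqrt hu.2)
  have hmean := setIntegral_ge_of_const_le_real measurableSet_Ioc measure_Ioc_lt_top.ne hle hint
  rw [Real.volume_real_Ioc_of_le (by linarith)] at hmean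
  calc φ s * √s = 2 * (φ s / √s * (s - s / 2)) := by
        rw [show 2 * (φ s / √s * (s - s / 2)) = φ s * (s / √s) by ring, Real.div_sqrt]
    _ ≤ _ := by gcongr

theorem tendsto_sqrt_div_sqrt_sub_atTop (u : ℝ) :
    Tendsto (fun t => √t / √(t - u)) atTop (𝓝 1) := by
  have hlim : Tendsto (fun t : ℝ => (√(1 - u / t))⁻¹) atTop (𝓝 (√(1 - 0))⁻¹) :=
    ((tendsto_const_nhds.sub (tendsto_const_nhds.div_atTop tendsto_id)).sqrt).inv₀ (by simp)
  rw [sub_zero, Real.sqrt_one, inv_one] at hlim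
  refine hlim.congr' ?_
  filter_upwards [eventually_gt_atTop 0] with t ht
  rw [show t - u = t * (1 - u / t) by field_simp, Real.sqrt_mul ht.le,
    div_mul_cancel_left₀ (Real.sqrt_pos.2 ht).ne']

theorem norm_sqrt_div_sqrt_sub_le {t u : ℝ} (h : 2 * u ≤ t) : ‖√t / √(t - u)‖ ≤ √2 := by
  rw [Real.norm_of_nonneg (by positivity)]
  exact Real.sqrt_div_sqrt_le_sqrt_two (by linarith)

theorem measurable_sqrt_div_sqrt_sub (t : ℝ) : Measurable fun u => √t / √(t - u) := by
  fun_prop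

theorem integrableOn_Ioo_half_mul_sqrt_div_sqrt_sub {f : ℝ → ℝ} (hf : IntegrableOn f (Ioi 0))
    (t : ℝ) : IntegrableOn (fun u => f u * (√t / √(t - u))) (Ioo 0 (t / 2)) := by
  refine (hf.mono_set Ioo_subset_Ioi_self).mul_bdd (c := √2)
    (measurable_sqrt_div_sqrt_sub t).aestronglyMeasurable ?_
  filter_upwards [ae_restrict_mem measurableSet_Ioo] with u hu
  exact norm_sqrt_div_sqrt_sub_le (by linarith [hu.2])

theorem tendsto_setIntegral_Ioo_half_mul_sqrt_div_sqrt_sub {f : ℝ → ℝ}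
    (hf : IntegrableOn f (Ioi 0)) :
    Tendsto (fun t => ∫ u in Ioo 0 (t / 2), f u * (√t / √(t - u))) atTop
      (𝓝 (∫ u in Ioi 0, f u)) := by
  have hlim : Tendsto (fun t => ∫ u in Ioi 0, (Ioo 0 (t / 2)).indicator
      (fun u => f u * (√t / √(t - u))) u) atTop (𝓝 (∫ u in Ioi 0, f u)) := by
    refine tendsto_integral_filter_of_dominated_convergence (fun u => ‖f u‖ * √2)
      (.of_forall fun t => ?_) (.of_forall fun t => ?_) (hf.norm.mul_const _) ?_
    · exact (hf.aestronglyMeasurable.mul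
        (measurable_sqrt_div_sqrt_sub t).aestronglyMeasurable).indicator measurableSet_Ioo
    · refine .of_forall fun u => ?_
      rw [norm_indicator_eq_indicator_norm]
      refine indicator_apply_le' (fun hu => ?_) fun _ => by positivity
      rw [norm_mul]
      exact mul_le_mul_of_nonneg_left (norm_sqrt_div_sqrt_sub_le (by linarith [hu.2]))
        (norm_nonneg _)
    · filter_upwards [ae_restrict_mem measurableSet_Ioi] with u hu
      have hlim := (tendsto_sqrt_div_sqrt_sub_atTop u).const_mul (f u)
      rw [mul_one] at hlim
      refine hlim.congr' ?_
      filter_upwards [eventually_gt_atTop (2 * u)] with t ht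
      rw [indicator_of_mem (show u ∈ Ioo 0 (t / 2) from ⟨hu, by linarith⟩)]
  refine hlim.congr fun t => ?_
  rw [setIntegral_indicator measurableSet_Ioo, inter_eq_self_of_subset_right Ioo_subset_Ioi_self]

section Tail

variable {φ : ℝ → ℝ} (hnonneg : ∀ u, 0 < u → 0 ≤ φ u) (hanti : AntitoneOn φ (Ioi 0))
include hnonneg hanti

theorem div_sqrt_mul_sqrt_div_sqrt_sub_le {t u : ℝ} (hu : u ∈ Ico (t / 2) t) :
    φ u / √u * (√t / √(t - u)) ≤ √2 * φ (t / 2) * (√(t - u))⁻¹ := by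
  have ht2 : 0 < t / 2 := by linarith [hu.1, hu.2]
  have hu0 : 0 < u := ht2.trans_le hu.1
  have hφ : φ u ≤ φ (t / 2) := hanti ht2 hu0 hu.1
  calc φ u / √u * (√t / √(t - u)) = φ u * (√t / √u) * (√(t - u))⁻¹ := by ring
    _ ≤ φ (t / 2) * √2 * (√(t - u))⁻¹ := by
        gcongr
        · exact hnonneg _ ht2
        · exact Real.sqrt_div_sqrt_le_sqrt_two (by linarith [hu.1])
    _ = √2 * φ (t / 2) * (√(t - u))⁻¹ := by ring

theorem integrableOn_Ico_half_div_sqrt_mul_sqrt_div_sqrt_sub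
    (hint : IntegrableOn (fun u => φ u / √u) (Ioi 0)) {t : ℝ} (ht : 0 < t) :
    IntegrableOn (fun u => φ u / √u * (√t / √(t - u))) (Ico (t / 2) t) := by
  have hbound : IntegrableOn (fun u => √2 * φ (t / 2) * (√(t - u))⁻¹) (Ico (t / 2) t) :=
    (integrableOn_Ico_inv_sqrt_sub (by linarith)).const_mul _
  refine hbound.mono' ((hint.mono_set fun u hu => ?_).aestronglyMeasurable.mul
    (measurable_sqrt_div_sqrt_sub t).aestronglyMeasurable) ?_
  · exact (half_pos ht).trans_le hu.1
  filter_upwards [ae_restrict_mem measurableSet_Ico] with u hu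
  rw [Real.norm_of_nonneg (mul_nonneg (div_nonneg (hnonneg u ((half_pos ht).trans_le hu.1))
    (Real.sqrt_nonneg _)) (by positivity))]
  exact div_sqrt_mul_sqrt_div_sqrt_sub_le hnonneg hanti hu

theorem setIntegral_Ico_half_div_sqrt_mul_sqrt_div_sqrt_sub_le
    (hint : IntegrableOn (fun u => φ u / √u) (Ioi 0)) {t : ℝ} (ht : 0 < t) :
    ∫ u in Ico (t / 2) t, φ u / √u * (√t / √(t - u)) ≤
      4 * √2 * ∫ u in t / 2 / 2..t / 2, φ u / √u := by
  have hsub : Ioc (t / 2 / 2) (t / 2) ⊆ Ioi 0 := fun u hu => mem_Ioi.2 (by linarith [hu.1])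
  calc ∫ u in Ico (t / 2) t, φ u / √u * (√t / √(t - u))
        ≤ ∫ u in t / 2..t, √2 * φ (t / 2) * (√(t - u))⁻¹ := by
          rw [intervalIntegral.integral_of_le (by linarith), ← integral_Ico_eq_integral_Ioc]
          exact setIntegral_mono_on
            (integrableOn_Ico_half_div_sqrt_mul_sqrt_div_sqrt_sub hnonneg hanti hint ht)
            ((integrableOn_Ico_inv_sqrt_sub (by linarith)).const_mul _)
            measurableSet_Ico fun u hu => div_sqrt_mul_sqrt_div_sqrt_sub_le hnonneg hanti hu
    _ = 2 * √2 * (φ (t / 2) * √(t / 2)) := by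
          rw [intervalIntegral.integral_const_mul, integral_inv_sqrt_sub (by linarith),
            show t - t / 2 = t / 2 by ring]
          ring
    _ ≤ 2 * √2 * (2 * ∫ u in Ioc (t / 2 / 2) (t / 2), φ u / √u) :=
          mul_le_mul_of_nonneg_left (hanti.mul_sqrt_le_two_mul_setIntegral_div_sqrt (half_pos ht)
            (hnonneg _ (half_pos ht)) (hint.mono_set hsub)) (by positivity)
    _ = 4 * √2 * ∫ u in t / 2 / 2..t / 2, φ u / √u := by
          rw [intervalIntegral.integral_of_le (by linarith)]
          ring

theorem tendsto_setIntegral_Ico_half_div_sqrt_mul_sqrt_div_sqrt_sub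
    (hint : IntegrableOn (fun u => φ u / √u) (Ioi 0)) :
    Tendsto (fun t => ∫ u in Ico (t / 2) t, φ u / √u * (√t / √(t - u))) atTop (𝓝 0) := by
  have hhalf : Tendsto (fun t : ℝ => t / 2) atTop atTop := tendsto_id.atTop_div_const two_pos
  have hvanish := (tendsto_intervalIntegral_zero_of_tendsto_atTop hint
    (hhalf.atTop_div_const two_pos) hhalf).const_mul (4 * √2)
  rw [mul_zero] at hvanish
  refine squeeze_zero' ?_ ?_ hvanish
  · filter_upwards [eventually_gt_atTop 0] with t ht
    refine setIntegral_nonneg measurableSet_Ico fun u hu => ?_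
    have hu0 : 0 < u := (half_pos ht).trans_le hu.1
    exact mul_nonneg (div_nonneg (hnonneg u hu0) (Real.sqrt_nonneg _)) (by positivity)
  · filter_upwards [eventually_gt_atTop 0] with t ht
    exact setIntegral_Ico_half_div_sqrt_mul_sqrt_div_sqrt_sub_le hnonneg hanti hint ht

end Tail

theorem sqrt_mul_setIntegral_Ioo_div_sqrt_mul_sub (φ : ℝ → ℝ) (t : ℝ) :
    √t * ∫ u in Ioo 0 t, φ u / √(u * (t - u)) =
      ∫ u in Ioo 0 t, φ u / √u * (√t / √(t - u)) := by
  rw [← integral_const_mul]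
  refine setIntegral_congr_fun measurableSet_Ioo fun u hu => ?_
  rw [Real.sqrt_mul hu.1.le]
  ring

/-- if `φ ≥ 0` is non-increasing on `(0,∞)` with `∫₀^∞ φ(u) u^{-1/2} du < ∞`,
then `√t ∫₀^t φ(u) (u(t-u))^{-1/2} du → ∫₀^∞ φ(u) u^{-1/2} du` as `t → ∞`. -/
theorem tendsto_sqrt_mul_integral_arcsine
    (φ : ℝ → ℝ) (hnonneg : ∀ u, 0 < u → 0 ≤ φ u) (hanti : AntitoneOn φ (Ioi 0))
    (hint : IntegrableOn (fun u => φ u / Real.sqrt u) (Ioi 0)) :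
    Tendsto (fun t => Real.sqrt t * ∫ u in Ioo 0 t, φ u / Real.sqrt (u * (t - u)))
      atTop (nhds (∫ u in Ioi 0, φ u / Real.sqrt u)) := by
  have hhead := tendsto_setIntegral_Ioo_half_mul_sqrt_div_sqrt_sub hint
  have htail := tendsto_setIntegral_Ico_half_div_sqrt_mul_sqrt_div_sqrt_sub hnonneg hanti hint
  rw [← add_zero (∫ u in Ioi 0, φ u / √u)]
  refine (hhead.add htail).congr' ?_
  filter_upwards [eventually_gt_atTop 0] with t ht
  rw [sqrt_mul_setIntegral_Ioo_div_sqrt_mul_sub, ← Ioo_union_Ico_eq_Ioo (half_pos ht)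
    (half_le_self ht.le), setIntegral_union ((Iio_disjoint_Ici le_rfl).mono Ioo_subset_Iio_self
    Ico_subset_Ici_self) measurableSet_Ico (integrableOn_Ioo_half_mul_sqrt_div_sqrt_sub hint t)
    (integrableOn_Ico_half_div_sqrt_mul_sqrt_div_sqrt_sub hnonneg hanti hint ht)]
end

section
/- Let φ be a non-negative non-increasing function on (0,∞), not Lebesgue-a.e. equal to zero, with ∫₀^∞ φ(u) u^{-1/2} du < ∞ and with φ(0+) = lim_{u→0+} φ(u) finite. Then there exist constants 0 < c₀ ≤ C₀ < ∞ such that for every Borel measurable f : (0,∞) → ℝ one has (with all integrals taken in [0,∞]): c₀ ∫₀^∞ |f(s)| (1+√s)^{-1} ds ≤ ∫₀^∞ φ(u) u^{-1/2} (∫₀^∞ |f(s+u)| s^{-1/2} ds) du ≤ C₀ ∫₀^∞ |f(s)| (1+√s)^{-1} ds. -/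
/-!
By Tonelli and the substitution `t = s + u`, the middle quantity is `∫₀^∞ |f t| K(t) dt` with
`K(t) = ∫₀ᵗ φ(u) u^{-1/2} (t - u)^{-1/2} du`, so it suffices to show `K(t) ≍ (1 + √t)⁻¹`.

From below: if `φ a > 0` then `φ ≥ φ a` on `(0, a)`, and integrating over `(0, min t a)` alone gives
`K(t) ≥ φ(a) min(1, √a) / (1 + √t)`.

From above: split at `t/2`. On `(0, t/2]` the factor `(t - u)^{-1/2}` is at most `(t/2)^{-1/2}`, and
`φ ≤ φ(0+) = L` or `∫₀^∞ φ(u) u^{-1/2} du = A` bounds that half by `2L` and by `2A/√t`. On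
`(t/2, t)` the weight is at most `φ(t/2) (t/2)^{-1/2}`, which gives `2φ(t/2)`, and monotonicity
gives `φ(t/2) √t ≤ A`.
-/

open MeasureTheory Filter Set
open scoped ENNReal Topology

lemma lintegral_Ioc_inv_sqrt {x : ℝ} (hx : 0 ≤ x) :
    ∫⁻ u in Ioc 0 x, ENNReal.ofReal (√u)⁻¹ = ENNReal.ofReal (2 * √x) := by
  have hrpow : EqOn (fun u : ℝ => ENNReal.ofReal (√u)⁻¹)
      (fun u => ENNReal.ofReal (u ^ (-(1 / 2) : ℝ))) (Ioc 0 x) := fun u hu => by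
    simp [Real.sqrt_eq_rpow, Real.rpow_neg hu.1.le]
  have hint : IntegrableOn (fun u : ℝ => u ^ (-(1 / 2) : ℝ)) (Ioc 0 x) :=
    (intervalIntegrable_iff_integrableOn_Ioc_of_le hx).1
      (intervalIntegral.intervalIntegrable_rpow' (by norm_num))
  rw [setLIntegral_congr_fun measurableSet_Ioc hrpow, ← ofReal_integral_eq_lintegral_ofReal hint
    (ae_restrict_of_forall_mem measurableSet_Ioc fun u hu => Real.rpow_nonneg hu.1.le _),
    ← intervalIntegral.integral_of_le hx, integral_rpow (Or.inl (by norm_num))]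
  congr 1
  rw [Real.sqrt_eq_rpow]
  norm_num
  ring

lemma setLIntegral_Ioi_comp_add_right (g : ℝ → ℝ≥0∞) (u : ℝ) :
    ∫⁻ s in Ioi 0, g (s + u) = ∫⁻ t in Ioi u, g t := by
  simpa using (measurePreserving_add_right volume u).setLIntegral_comp_preimage_emb
    (MeasurableEquiv.addRight u).measurableEmbedding g (Ioi u)

lemma setLIntegral_Ioo_comp_sub_left (g : ℝ → ℝ≥0∞) (t a b : ℝ) :
    ∫⁻ u in Ioo a b, g (t - u) = ∫⁻ v in Ioo (t - b) (t - a), g v := by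
  have hpre : (fun u => t - u) ⁻¹' Ioo (t - b) (t - a) = Ioo a b := by
    ext u
    simp only [mem_preimage, mem_Ioo]
    constructor <;> rintro ⟨h₁, h₂⟩ <;> constructor <;> linarith
  simpa [hpre] using (Measure.measurePreserving_sub_left volume t).setLIntegral_comp_preimage_emb
    (MeasurableEquiv.subLeft t).measurableEmbedding g (Ioo (t - b) (t - a))

lemma lintegral_Ioc_const_mul_inv_sqrt {c x : ℝ} (hc : 0 ≤ c) (hx : 0 ≤ x) :
    ∫⁻ u in Ioc 0 x, ENNReal.ofReal (c * (√u)⁻¹) = ENNReal.ofReal (2 * c * √x) := by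
  simp_rw [ENNReal.ofReal_mul hc]
  rw [lintegral_const_mul' _ _ ENNReal.ofReal_ne_top, lintegral_Ioc_inv_sqrt hx,
    ← ENNReal.ofReal_mul hc]
  ring_nf

lemma AntitoneOn.ofReal_mul_sqrt_le_setLIntegral {φ : ℝ → ℝ} (hanti : AntitoneOn φ (Ioi 0))
    {x : ℝ} (hx : 0 < x) (hφx : 0 ≤ φ x) :
    ENNReal.ofReal (2 * φ x * √x) ≤ ∫⁻ u in Ioc 0 x, ENNReal.ofReal (φ u / √u) := by
  rw [← lintegral_Ioc_const_mul_inv_sqrt hφx hx.le]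
  refine setLIntegral_mono' measurableSet_Ioc fun u hu => ENNReal.ofReal_le_ofReal ?_
  rw [div_eq_mul_inv]
  gcongr
  exact hanti hu.1 hx hu.2

lemma lintegral_Ioi_mul_lintegral_shift {w g k : ℝ → ℝ≥0∞}
    (hw : AEMeasurable w (volume.restrict (Ioi 0))) (hg : Measurable g) (hk : Measurable k) :
    ∫⁻ u in Ioi 0, w u * ∫⁻ s in Ioi 0, g (s + u) * k s =
      ∫⁻ t in Ioi 0, g t * ∫⁻ u in Ioo 0 t, w u * k (t - u) := by
  set F : ℝ → ℝ → ℝ≥0∞ := fun u t => if u < t then w u * (g t * k (t - u)) else 0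
  have hF_meas : AEMeasurable (Function.uncurry F)
      ((volume.restrict (Ioi 0)).prod (volume.restrict (Ioi 0))) :=
    (hw.comp_fst.mul (by fun_prop)).indicator (measurableSet_lt measurable_fst measurable_snd)
  have h_inner (u : ℝ) (hu : u ∈ Ioi 0) :
      w u * ∫⁻ s in Ioi 0, g (s + u) * k s = ∫⁻ t in Ioi 0, F u t := by
    have h_shift := setLIntegral_Ioi_comp_add_right (fun t => g t * k (t - u)) u
    simp only [add_sub_cancel_right] at h_shift
    rw [h_shift, ← lintegral_const_mul _ (by fun_prop),
      ← inter_eq_self_of_subset_left (Ioi_subset_Ioi (le_of_lt hu)),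
      ← setLIntegral_indicator measurableSet_Ioi]
    simp only [indicator_apply, mem_Ioi, F]
  have h_outer (t : ℝ) (ht : t ∈ Ioi 0) :
      ∫⁻ u in Ioi 0, F u t = g t * ∫⁻ u in Ioo 0 t, w u * k (t - u) := by
    have hw_t : AEMeasurable (fun u => w u * k (t - u)) (volume.restrict (Ioo 0 t)) :=
      (hw.mono_set Ioo_subset_Ioi_self).mul (by fun_prop)
    rw [← lintegral_const_mul'' _ hw_t, ← Iio_inter_Ioi, ← setLIntegral_indicator measurableSet_Iio]
    simp only [indicator_apply, mem_Iio, F, mul_left_comm]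
  rw [setLIntegral_congr_fun measurableSet_Ioi h_inner, lintegral_lintegral_swap hF_meas,
    setLIntegral_congr_fun measurableSet_Ioi h_outer]

lemma ofReal_mul_lintegral_ofReal_div {α : Type*} [MeasurableSpace α] {μ : Measure α} {c : ℝ}
    (hc : 0 ≤ c) {g h : α → ℝ} (hg : ∀ x, 0 ≤ g x) :
    ENNReal.ofReal c * ∫⁻ x, ENNReal.ofReal (g x / h x) ∂μ =
      ∫⁻ x, ENNReal.ofReal (g x) * ENNReal.ofReal (c / h x) ∂μ := by
  rw [← lintegral_const_mul' _ _ ENNReal.ofReal_ne_top]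
  congr 1 with x
  rw [← ENNReal.ofReal_mul hc, ← ENNReal.ofReal_mul (hg x)]
  ring_nf

lemma AntitoneOn.le_of_tendsto_nhdsGT {φ : ℝ → ℝ} {a L u : ℝ} (hanti : AntitoneOn φ (Ioi a))
    (hlim : Tendsto φ (𝓝[>] a) (𝓝 L)) (hu : a < u) : φ u ≤ L :=
  ge_of_tendsto hlim <| by
    filter_upwards [Ioo_mem_nhdsGT hu] with v hv
    exact hanti hv.1 hu hv.2.le

noncomputable def abelKernel (φ : ℝ → ℝ) (t : ℝ) : ℝ≥0∞ :=
  ∫⁻ u in Ioo 0 t, ENNReal.ofReal (φ u / √u) * ENNReal.ofReal (√(t - u))⁻¹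

lemma min_one_sqrt_div_one_add_sqrt_le {a t : ℝ} (ht : 0 < t) :
    min 1 √a / (1 + √t) ≤ 2 * √(min t a) / √t := by
  have hst : 0 < √t := Real.sqrt_pos.2 ht
  rw [div_le_div_iff₀ (by positivity) hst]
  rcases le_total t a with hta | hat
  · rw [min_eq_left hta]
    nlinarith [min_le_left 1 √a, Real.sqrt_nonneg a]
  · rw [min_eq_right hat]
    nlinarith [min_le_right 1 √a, Real.sqrt_nonneg a, le_min zero_le_one (Real.sqrt_nonneg a)]

lemma ofReal_div_one_add_sqrt_le_abelKernel {φ : ℝ → ℝ} (hanti : AntitoneOn φ (Ioi 0))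
    {a t : ℝ} (ha : 0 < a) (hφa : 0 ≤ φ a) (ht : 0 < t) :
    ENNReal.ofReal (φ a * min 1 √a / (1 + √t)) ≤ abelKernel φ t := by
  have hm : 0 < min t a := lt_min ht ha
  calc ENNReal.ofReal (φ a * min 1 √a / (1 + √t))
      ≤ ENNReal.ofReal (2 * (φ a / √t) * √(min t a)) := by
        refine ENNReal.ofReal_le_ofReal ?_
        rw [mul_div_assoc]
        exact (mul_le_mul_of_nonneg_left (min_one_sqrt_div_one_add_sqrt_le ht) hφa).trans_eq
          (by ring)
    _ = ∫⁻ u in Ioo 0 (min t a), ENNReal.ofReal (φ a / √t * (√u)⁻¹) := by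
        rw [setLIntegral_congr Ioo_ae_eq_Ioc,
          lintegral_Ioc_const_mul_inv_sqrt (by positivity) hm.le]
    _ ≤ ∫⁻ u in Ioo 0 (min t a), ENNReal.ofReal (φ u / √u) * ENNReal.ofReal (√(t - u))⁻¹ := by
        refine setLIntegral_mono' measurableSet_Ioo fun u hu => ?_
        have hut : u < t := hu.2.trans_le (min_le_left t a)
        have hφu : φ a ≤ φ u := hanti hu.1 ha (hu.2.trans_le (min_le_right t a)).le
        rw [← ENNReal.ofReal_mul (div_nonneg (hφa.trans hφu) (Real.sqrt_nonneg u))]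
        refine ENNReal.ofReal_le_ofReal ?_
        calc φ a / √t * (√u)⁻¹ = φ a / √u * (√t)⁻¹ := by ring
          _ ≤ φ u / √u * (√(t - u))⁻¹ := by
            refine mul_le_mul (div_le_div_of_nonneg_right hφu (Real.sqrt_nonneg u))
              (inv_anti₀ (Real.sqrt_pos.2 (sub_pos.2 hut)) (Real.sqrt_le_sqrt (by linarith [hu.1])))
              (by positivity) (div_nonneg (hφa.trans hφu) (Real.sqrt_nonneg u))
    _ ≤ abelKernel φ t := lintegral_mono_set (Ioo_subset_Ioo_right (min_le_left t a))

lemma le_ofReal_div_one_add_sqrt {z : ℝ≥0∞} {x y t : ℝ} (hx : 0 ≤ x) (hy : 0 ≤ y) (ht : 0 < t)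
    (hzx : z ≤ ENNReal.ofReal x) (hzy : z ≤ ENNReal.ofReal (y / √t)) :
    z ≤ ENNReal.ofReal (2 * (x + y) / (1 + √t)) := by
  have hst : 0 < √t := Real.sqrt_pos.2 ht
  rcases le_total (√t) 1 with hle | hle
  · refine hzx.trans (ENNReal.ofReal_le_ofReal ?_)
    rw [le_div_iff₀ (by positivity)]
    nlinarith
  · refine hzy.trans (ENNReal.ofReal_le_ofReal ?_)
    rw [div_le_div_iff₀ hst (by positivity)]
    nlinarith

lemma abelKernel_le {φ : ℝ → ℝ} (hnonneg : ∀ u, 0 < u → 0 ≤ φ u) (hanti : AntitoneOn φ (Ioi 0))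
    {L A t : ℝ} (hL : ∀ u, 0 < u → φ u ≤ L) (hA0 : 0 ≤ A)
    (hA : ∫⁻ u in Ioi 0, ENNReal.ofReal (φ u / √u) ≤ ENNReal.ofReal A) (ht : 0 < t) :
    abelKernel φ t ≤ ENNReal.ofReal (8 * (L + A) / (1 + √t)) := by
  set x := t / 2 with hx_def
  have hx : 0 < x := half_pos ht
  have hsx : 0 < √x := Real.sqrt_pos.2 hx
  have hst : 0 < √t := Real.sqrt_pos.2 ht
  have hφx : 0 ≤ φ x := hnonneg x hx
  have hL0 : 0 ≤ L := hφx.trans (hL x hx)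
  have hsqrt : √t ≤ 2 * √x := by nlinarith [Real.sq_sqrt ht.le, Real.sq_sqrt hx.le]
  have hφx_A : φ x ≤ A / √t := by
    have h := (hanti.ofReal_mul_sqrt_le_setLIntegral hx hφx).trans
      ((lintegral_mono_set fun u hu => hu.1).trans hA)
    rw [ENNReal.ofReal_le_ofReal_iff hA0] at h
    rw [le_div_iff₀ hst]
    nlinarith
  have hsub (u : ℝ) (hu : u ≤ x) : (√(t - u))⁻¹ ≤ (√x)⁻¹ :=
    inv_anti₀ hsx (Real.sqrt_le_sqrt (by linarith))
  have hsplit : abelKernel φ t =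
      (∫⁻ u in Ioc 0 x, ENNReal.ofReal (φ u / √u) * ENNReal.ofReal (√(t - u))⁻¹) +
        ∫⁻ u in Ioo x t, ENNReal.ofReal (φ u / √u) * ENNReal.ofReal (√(t - u))⁻¹ := by
    rw [abelKernel, ← Ioc_union_Ioo_eq_Ioo hx.le (half_lt_self ht),
      lintegral_union measurableSet_Ioo (Ioc_disjoint_Ioi_same.mono_right Ioo_subset_Ioi_self)]
  have hP₁_L : ∫⁻ u in Ioc 0 x, ENNReal.ofReal (φ u / √u) * ENNReal.ofReal (√(t - u))⁻¹ ≤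
      ENNReal.ofReal (2 * L) := by
    calc _ ≤ ∫⁻ u in Ioc 0 x, ENNReal.ofReal (L / √x * (√u)⁻¹) := by
          refine setLIntegral_mono' measurableSet_Ioc fun u hu => ?_
          rw [← ENNReal.ofReal_mul (div_nonneg (hnonneg u hu.1) (Real.sqrt_nonneg u))]
          refine ENNReal.ofReal_le_ofReal ?_
          calc φ u / √u * (√(t - u))⁻¹ ≤ L / √u * (√x)⁻¹ :=
                mul_le_mul (div_le_div_of_nonneg_right (hL u hu.1) (Real.sqrt_nonneg u))
                  (hsub u hu.2) (by positivity) (by positivity)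
            _ = L / √x * (√u)⁻¹ := by ring
      _ = ENNReal.ofReal (2 * L) := by
          rw [lintegral_Ioc_const_mul_inv_sqrt (by positivity) hx.le]
          field_simp
  have hP₁_A : ∫⁻ u in Ioc 0 x, ENNReal.ofReal (φ u / √u) * ENNReal.ofReal (√(t - u))⁻¹ ≤
      ENNReal.ofReal (2 * A / √t) := by
    calc _ ≤ ∫⁻ u in Ioc 0 x, ENNReal.ofReal (2 / √t) * ENNReal.ofReal (φ u / √u) := by
          refine setLIntegral_mono' measurableSet_Ioc fun u hu => ?_
          rw [mul_comm]
          refine mul_le_mul_left (ENNReal.ofReal_le_ofReal ((hsub u hu.2).trans ?_)) _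
          rw [inv_le_comm₀ hsx (by positivity), inv_div]
          linarith
      _ ≤ ENNReal.ofReal (2 / √t) * ENNReal.ofReal A := by
          rw [lintegral_const_mul' _ _ ENNReal.ofReal_ne_top]
          exact mul_le_mul_right ((lintegral_mono_set fun u hu => hu.1).trans hA) _
      _ = ENNReal.ofReal (2 * A / √t) := by
          rw [← ENNReal.ofReal_mul (by positivity)]
          ring_nf
  have hP₂ : ∫⁻ u in Ioo x t, ENNReal.ofReal (φ u / √u) * ENNReal.ofReal (√(t - u))⁻¹ ≤
      ENNReal.ofReal (2 * φ x) := by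
    calc _ ≤ ∫⁻ u in Ioo x t, ENNReal.ofReal (φ x / √x * (√(t - u))⁻¹) := by
          refine setLIntegral_mono' measurableSet_Ioo fun u hu => ?_
          have hu₀ : 0 < u := hx.trans hu.1
          rw [← ENNReal.ofReal_mul (div_nonneg (hnonneg u hu₀) (Real.sqrt_nonneg u))]
          refine ENNReal.ofReal_le_ofReal (mul_le_mul_of_nonneg_right ?_ (by positivity))
          exact div_le_div₀ hφx (hanti hx hu₀ hu.1.le) hsx (Real.sqrt_le_sqrt hu.1.le)
      _ = ∫⁻ v in Ioc 0 x, ENNReal.ofReal (φ x / √x * (√v)⁻¹) := by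
          rw [setLIntegral_Ioo_comp_sub_left (fun v => ENNReal.ofReal (φ x / √x * (√v)⁻¹)),
            sub_self, hx_def, sub_half, setLIntegral_congr Ioo_ae_eq_Ioc]
      _ = ENNReal.ofReal (2 * φ x) := by
          rw [lintegral_Ioc_const_mul_inv_sqrt (by positivity) hx.le]
          field_simp
  refine (le_ofReal_div_one_add_sqrt (x := 4 * L) (y := 4 * A) (by positivity) (by positivity) ht
    ?_ ?_).trans_eq (by ring_nf)
  · rw [hsplit, show 4 * L = 2 * L + 2 * L by ring,
      ENNReal.ofReal_add (by positivity) (by positivity)]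
    exact add_le_add hP₁_L (hP₂.trans (ENNReal.ofReal_le_ofReal (by linarith [hL x hx])))
  · rw [hsplit, show 4 * A / √t = 2 * A / √t + 2 * A / √t by ring,
      ENNReal.ofReal_add (by positivity) (by positivity)]
    refine add_le_add hP₁_A (hP₂.trans (ENNReal.ofReal_le_ofReal ?_))
    rw [mul_div_assoc]
    linarith

lemma lintegral_weighted_shift_eq_lintegral_mul_abelKernel {φ f : ℝ → ℝ}
    (hφ : AEMeasurable (fun u => φ u / √u) (volume.restrict (Ioi 0))) (hf : Measurable f) :
    ∫⁻ u in Ioi 0, ENNReal.ofReal (φ u / √u) *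
        ∫⁻ s in Ioi 0, ENNReal.ofReal (|f (s + u)| / √s) =
      ∫⁻ t in Ioi 0, ENNReal.ofReal |f t| * abelKernel φ t := by
  have h_split (u s : ℝ) : ENNReal.ofReal (|f (s + u)| / √s) =
      ENNReal.ofReal |f (s + u)| * ENNReal.ofReal (√s)⁻¹ := by
    rw [div_eq_mul_inv, ENNReal.ofReal_mul (abs_nonneg _)]
  simp_rw [h_split]
  exact lintegral_Ioi_mul_lintegral_shift (g := fun t => ENNReal.ofReal |f t|)
    (k := fun s => ENNReal.ofReal (√s)⁻¹) hφ.ennreal_ofReal (by fun_prop) (by fun_prop)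

/-- for `φ ≥ 0` non-increasing on `(0,∞)`, not a.e. zero, with
`∫₀^∞ φ(u) u^{-1/2} du < ∞` and finite right limit `φ(0+)`, there are constants
`0 < c₀ ≤ C₀ < ∞` with
`c₀ ∫₀^∞ |f(s)|/(1+√s) ds ≤ ∫₀^∞ φ(u) u^{-1/2} (∫₀^∞ |f(s+u)| s^{-1/2} ds) du
  ≤ C₀ ∫₀^∞ |f(s)|/(1+√s) ds`
for every Borel `f`, all integrals being taken in `[0,∞]`. -/
theorem exists_const_norm_equiv_weighted_shift
    (φ : ℝ → ℝ) (hnonneg : ∀ u, 0 < u → 0 ≤ φ u) (hanti : AntitoneOn φ (Ioi 0))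
    (hint : IntegrableOn (fun u => φ u / Real.sqrt u) (Ioi 0))
    (hlim : ∃ L : ℝ, Tendsto φ (nhdsWithin 0 (Ioi 0)) (nhds L))
    (hne : ¬ (∀ᵐ u ∂(volume.restrict (Ioi 0)), φ u = 0)) :
    ∃ c₀ C₀ : ℝ, 0 < c₀ ∧ c₀ ≤ C₀ ∧
      ∀ f : ℝ → ℝ, Measurable f →
        ENNReal.ofReal c₀ * ∫⁻ s in Ioi 0, ENNReal.ofReal (|f s| / (1 + Real.sqrt s)) ≤
          (∫⁻ u in Ioi 0, ENNReal.ofReal (φ u / Real.sqrt u) *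
            ∫⁻ s in Ioi 0, ENNReal.ofReal (|f (s + u)| / Real.sqrt s)) ∧
        (∫⁻ u in Ioi 0, ENNReal.ofReal (φ u / Real.sqrt u) *
            ∫⁻ s in Ioi 0, ENNReal.ofReal (|f (s + u)| / Real.sqrt s)) ≤
          ENNReal.ofReal C₀ * ∫⁻ s in Ioi 0, ENNReal.ofReal (|f s| / (1 + Real.sqrt s)) := by
  obtain ⟨L, hL⟩ := hlim
  have hφL (u : ℝ) (hu : 0 < u) : φ u ≤ L := hanti.le_of_tendsto_nhdsGT hL hu
  obtain ⟨a, ha, hφa⟩ : ∃ a, 0 < a ∧ 0 < φ a := by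
    by_contra! h
    exact hne (ae_restrict_of_forall_mem measurableSet_Ioi fun u hu =>
      le_antisymm (h u hu) (hnonneg u hu))
  set A := (∫⁻ u in Ioi 0, ENNReal.ofReal (φ u / √u)).toReal
  have hA : ∫⁻ u in Ioi 0, ENNReal.ofReal (φ u / √u) ≤ ENNReal.ofReal A :=
    (ENNReal.ofReal_toReal hint.setLIntegral_lt_top.ne).ge
  have hc₀ : 0 < φ a * min 1 √a := mul_pos hφa (lt_min one_pos (Real.sqrt_pos.2 ha))
  refine ⟨φ a * min 1 √a, max (φ a * min 1 √a) (8 * (L + A)), hc₀, le_max_left _ _,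
    fun f hf => ?_⟩
  rw [lintegral_weighted_shift_eq_lintegral_mul_abelKernel hint.aemeasurable hf,
    ofReal_mul_lintegral_ofReal_div hc₀.le fun _ => abs_nonneg _,
    ofReal_mul_lintegral_ofReal_div (hc₀.le.trans (le_max_left _ _)) fun _ => abs_nonneg _]
  refine ⟨setLIntegral_mono' measurableSet_Ioi fun t ht => ?_,
    setLIntegral_mono' measurableSet_Ioi fun t ht => ?_⟩
  · exact mul_le_mul_right (ofReal_div_one_add_sqrt_le_abelKernel hanti ha hφa.le ht) _
  · refine mul_le_mul_right ((abelKernel_le hnonneg hanti hφL ENNReal.toReal_nonneg hA ht).trans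
      (ENNReal.ofReal_le_ofReal ?_)) _
    gcongr
    exact le_max_right _ _
end

section
/- Let (B_t)_{t≥0} be a standard one-dimensional Brownian motion started at 0, let 0 < u < ∞, and define the Brownian bridge X_s := B_s − (s/u) B_u for s ∈ [0,u]. Let n ∈ ℕ, c₁, …, cₙ ∈ ℝ, 0 = t₀ < t₁ < ⋯ < tₙ < u, and let f = Σ_{k=1}^n c_k 1_{[t_{k−1}, t_k)} on [0,u]. Then E[(Σ_{k=1}^n c_k (X_{t_k} − X_{t_{k−1}}))²] = ∫₀^u |(π_u f)(s)|² ds, where (π_u f)(s) = f(s) − (1/u) ∫₀^u f(t) dt. -/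
/-! Continue the partition by `tₙ₊₁ = u` and the heights by `cₙ = 0`. As `B 0 = 0`, `B u`
telescopes into the sum of the increments `B tₖ₊₁ − B tₖ`, so the bridge integral is
`∑ (cₖ − m) (B tₖ₊₁ − B tₖ)` with `m = (1/u) ∫₀^u f`: a combination of independent centred
Gaussians of variances `tₖ₊₁ − tₖ`. Its second moment `∑ (cₖ − m)² (tₖ₊₁ − tₖ)` is the integral
of the step function `(f − m)²`. -/

open MeasureTheory ProbabilityTheory Filter Set

/-- A standard one-dimensional Brownian motion started at 0 under the probability
measure `P`: it starts at `0`, has Gaussian increments `B_t − B_s ∼ N(0, t−s)` for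
`0 ≤ s ≤ t`, and has independent increments. -/
structure IsBrownianMotion {Ω : Type*} [MeasurableSpace Ω] (P : Measure Ω)
    (B : ℝ → Ω → ℝ) : Prop where
  isProb : IsProbabilityMeasure P
  start : ∀ ω, B 0 ω = 0
  meas : ∀ t, Measurable (B t)
  incr_law : ∀ s t : ℝ, 0 ≤ s → s ≤ t →
    P.map (fun ω => B t ω - B s ω) = gaussianReal 0 (t - s).toNNReal
  indep_incr : ∀ u : ℕ → ℝ, 0 ≤ u 0 → Monotone u →
    iIndepFun (fun k ω => B (u (k + 1)) ω - B (u k) ω) P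

section Extend

variable {α β : Type*}

lemma monotone_extend_val [Preorder α] {n : ℕ} {t : Fin (n + 1) → α} (ht : Monotone t) {u : α}
    (htu : t (Fin.last n) ≤ u) : Monotone (Function.extend Fin.val t fun _ => u) := by
  have hlt : ∀ k (hk : k < n + 1), Function.extend Fin.val t (fun _ => u) k = t ⟨k, hk⟩ :=
    fun k hk => Fin.val_injective.extend_apply t _ ⟨k, hk⟩
  have hge : ∀ k, n + 1 ≤ k → Function.extend Fin.val t (fun _ => u) k = u :=
    fun k hk => Function.extend_apply' _ _ _ fun ⟨a, ha⟩ => by omega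
  refine monotone_nat_of_le_succ fun k => ?_
  rcases lt_trichotomy (k + 1) (n + 1) with h | h | h
  · rw [hlt k (by omega), hlt (k + 1) h]
    exact ht (Fin.mk_le_mk.2 k.le_succ)
  · rw [hlt k (by omega), hge (k + 1) h.ge]
    exact (ht (Fin.le_last _)).trans htu
  · rw [hge k (by omega), hge (k + 1) h.le]

lemma Fin.sum_univ_eq_sum_range_extend [Zero β] {M : Type*} [AddCommMonoid M] {n : ℕ}
    (φ : β → α → α → M) (hφ : ∀ a b, φ 0 a b = 0) (c : Fin n → β) (t : Fin (n + 1) → α) (u : α) :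
    ∑ k : Fin n, φ (c k) (t k.castSucc) (t k.succ) =
      ∑ k ∈ Finset.range (n + 1), φ (Function.extend Fin.val c 0 k)
        (Function.extend Fin.val t (fun _ => u) k)
        (Function.extend Fin.val t (fun _ => u) (k + 1)) := by
  rw [Finset.sum_range_succ, Function.extend_apply' _ _ _ fun ⟨a, ha⟩ => by omega, Pi.zero_apply,
    hφ, add_zero, ← Fin.sum_univ_eq_sum_range]
  refine Finset.sum_congr rfl fun k _ => ?_
  rw [← Fin.val_succ, Fin.val_injective.extend_apply c, Fin.val_injective.extend_apply t _ k.succ,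
    ← Fin.val_castSucc, Fin.val_injective.extend_apply]

end Extend

section StepFunction

lemma sum_ite_mem_Ico_eq {g : ℕ → ℝ} (hg : Monotone g) (C : ℕ → ℝ) {N j : ℕ} (hj : j < N)
    {s : ℝ} (hs : s ∈ Ico (g j) (g (j + 1))) :
    ∑ k ∈ Finset.range N, (if s ∈ Ico (g k) (g (k + 1)) then C k else 0) = C j := by
  refine (Finset.sum_eq_single_of_mem j (Finset.mem_range.2 hj)
    fun k _ hkj => if_neg fun hk => ?_).trans (if_pos hs)
  exact Set.disjoint_left.1 (hg.pairwise_disjoint_on_Ico_succ hkj) hk hs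

lemma ae_restrict_Ioc_eq_of_eqOn_Ioo {F : ℝ → ℝ} {a b C : ℝ}
    (h : EqOn F (fun _ => C) (Ioo a b)) : F =ᵐ[volume.restrict (Ioc a b)] fun _ => C :=
  ae_restrict_of_ae_eq_of_ae_restrict Ioo_ae_eq_Ioc (ae_restrict_of_forall_mem measurableSet_Ioo h)

lemma intervalIntegrable_of_eqOn_Ioo {F : ℝ → ℝ} {a b C : ℝ} (hab : a ≤ b)
    (h : EqOn F (fun _ => C) (Ioo a b)) : IntervalIntegrable F volume a b := by
  rw [intervalIntegrable_iff_integrableOn_Ioc_of_le hab]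
  exact (integrableOn_const measure_Ioc_lt_top.ne).congr (ae_restrict_Ioc_eq_of_eqOn_Ioo h).symm

lemma intervalIntegral_eq_mul_of_eqOn_Ioo {F : ℝ → ℝ} {a b C : ℝ} (hab : a ≤ b)
    (h : EqOn F (fun _ => C) (Ioo a b)) : ∫ s in a..b, F s = C * (b - a) := by
  rw [intervalIntegral.integral_of_le hab, integral_congr_ae (ae_restrict_Ioc_eq_of_eqOn_Ioo h),
    setIntegral_const, Real.volume_real_Ioc_of_le hab, smul_eq_mul, mul_comm]

lemma intervalIntegral_eq_sum_of_eqOn_Ioo {g : ℕ → ℝ} (hg : Monotone g) {F : ℝ → ℝ}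
    {C : ℕ → ℝ} {N : ℕ} (hF : ∀ k < N, EqOn F (fun _ => C k) (Ioo (g k) (g (k + 1)))) :
    ∫ s in g 0..g N, F s = ∑ k ∈ Finset.range N, C k * (g (k + 1) - g k) := by
  rw [← intervalIntegral.sum_integral_adjacent_intervals
    fun k hk => intervalIntegrable_of_eqOn_Ioo (hg k.le_succ) (hF k hk)]
  exact Finset.sum_congr rfl fun k hk =>
    intervalIntegral_eq_mul_of_eqOn_Ioo (hg k.le_succ) (hF k (Finset.mem_range.1 hk))

end StepFunction

lemma sum_mul_bridge_increment_eq {b : ℝ → ℝ} {g : ℕ → ℝ} {u : ℝ} {N : ℕ} (h0 : b (g 0) = 0)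
    (hN : g N = u) (C : ℕ → ℝ) :
    ∑ k ∈ Finset.range N,
        C k * ((b (g (k + 1)) - g (k + 1) / u * b u) - (b (g k) - g k / u * b u)) =
      ∑ k ∈ Finset.range N,
        (C k - (∑ j ∈ Finset.range N, C j * (g (j + 1) - g j)) / u) *
          (b (g (k + 1)) - b (g k)) := by
  have htelescope : ∑ k ∈ Finset.range N, (b (g (k + 1)) - b (g k)) = b u := by
    rw [Finset.sum_range_sub (fun k => b (g k)), hN, h0, sub_zero]
  set m := (∑ j ∈ Finset.range N, C j * (g (j + 1) - g j)) / u
  calc _ = ∑ k ∈ Finset.range N,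
        (C k * (b (g (k + 1)) - b (g k)) - C k * (g (k + 1) - g k) / u * b u) :=
        Finset.sum_congr rfl fun k _ => by ring
    _ = ∑ k ∈ Finset.range N, C k * (b (g (k + 1)) - b (g k)) -
        m * ∑ k ∈ Finset.range N, (b (g (k + 1)) - b (g k)) := by
      rw [Finset.sum_sub_distrib, htelescope, ← Finset.sum_mul, ← Finset.sum_div, mul_comm]
    _ = _ := by
      rw [Finset.mul_sum, ← Finset.sum_sub_distrib]
      exact Finset.sum_congr rfl fun k _ => by ring

lemma ProbabilityTheory.iIndepFun.variance_sum_const_mul {Ω ι : Type*} [MeasurableSpace Ω]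
    {P : Measure Ω} {X : ι → Ω → ℝ} (hX : iIndepFun X P) {s : Finset ι}
    (hs : ∀ i ∈ s, MemLp (X i) 2 P) (d : ι → ℝ) :
    Var[fun ω => ∑ i ∈ s, d i * X i ω; P] = ∑ i ∈ s, d i ^ 2 * Var[X i; P] := by
  have h := IndepFun.variance_sum (X := fun i ω => d i * X i ω)
    (fun i hi => (hs i hi).const_mul (d i)) fun i _ j _ hij =>
      (hX.indepFun hij).comp (measurable_const_mul (d i)) (measurable_const_mul (d j))
  convert h using 1
  · congr 1
    ext ω
    simp only [Finset.sum_apply]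
  · exact Finset.sum_congr rfl fun i _ => (variance_const_mul _ _ _).symm

namespace IsBrownianMotion

variable {Ω : Type*} [MeasurableSpace Ω] {P : Measure Ω} {B : ℝ → Ω → ℝ} {s t : ℝ}

lemma hasLaw_sub (hB : IsBrownianMotion P B) (hs : 0 ≤ s) (hst : s ≤ t) :
    HasLaw (fun ω => B t ω - B s ω) (gaussianReal 0 (t - s).toNNReal) P :=
  ⟨((hB.meas t).sub (hB.meas s)).aemeasurable, hB.incr_law s t hs hst⟩

lemma memLp_sub (hB : IsBrownianMotion P B) (hs : 0 ≤ s) (hst : s ≤ t) :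
    MemLp (fun ω => B t ω - B s ω) 2 P := by
  have hX := hB.hasLaw_sub hs hst
  rw [← Function.id_comp (fun ω => B t ω - B s ω), ← memLp_map_measure_iff _ hX.aemeasurable,
    hX.map_eq]
  · exact memLp_id_gaussianReal 2
  · rw [hX.map_eq]
    exact aestronglyMeasurable_id

lemma integral_sub (hB : IsBrownianMotion P B) (hs : 0 ≤ s) (hst : s ≤ t) :
    ∫ ω, (B t ω - B s ω) ∂P = 0 :=
  (hB.hasLaw_sub hs hst).integral_eq.trans integral_id_gaussianReal

lemma variance_sub (hB : IsBrownianMotion P B) (hs : 0 ≤ s) (hst : s ≤ t) :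
    Var[fun ω => B t ω - B s ω; P] = t - s := by
  rw [(hB.hasLaw_sub hs hst).variance_eq, variance_id_gaussianReal,
    Real.coe_toNNReal _ (sub_nonneg.2 hst)]

lemma integral_sq_sum_mul_sub (hB : IsBrownianMotion P B) {g : ℕ → ℝ} (hg0 : 0 ≤ g 0)
    (hg : Monotone g) (d : ℕ → ℝ) (N : ℕ) :
    ∫ ω, (∑ k ∈ Finset.range N, d k * (B (g (k + 1)) ω - B (g k) ω)) ^ 2 ∂P =
      ∑ k ∈ Finset.range N, d k ^ 2 * (g (k + 1) - g k) := by
  have := hB.isProb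
  have hg0k : ∀ k, 0 ≤ g k := fun k => hg0.trans (hg k.zero_le)
  have hmemLp : ∀ k, MemLp (fun ω => B (g (k + 1)) ω - B (g k) ω) 2 P := fun k =>
    hB.memLp_sub (hg0k k) (hg k.le_succ)
  have hmean : ∫ ω, ∑ k ∈ Finset.range N, d k * (B (g (k + 1)) ω - B (g k) ω) ∂P = 0 := by
    rw [integral_finsetSum _ fun k _ => ((hmemLp k).const_mul (d k)).integrable one_le_two]
    exact Finset.sum_eq_zero fun k _ => by
      rw [integral_const_mul, hB.integral_sub (hg0k k) (hg k.le_succ), mul_zero]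
  have hmeas := hB.meas
  rw [← variance_of_integral_eq_zero (by fun_prop) hmean,
    (hB.indep_incr g hg0 hg).variance_sum_const_mul (fun k _ => hmemLp k)]
  exact Finset.sum_congr rfl fun k _ => by rw [hB.variance_sub (hg0k k) (hg k.le_succ)]

end IsBrownianMotion

theorem integral_sq_wiener_integral_stepFun_brownianBridge_general
    {Ω : Type*} [MeasurableSpace Ω] (P : Measure Ω) (B : ℝ → Ω → ℝ)
    (hB : IsBrownianMotion P B) (u : ℝ)
    (n : ℕ) (c : Fin n → ℝ) (t : Fin (n + 1) → ℝ)
    (ht0 : t 0 = 0) (ht : StrictMono t) (htu : t (Fin.last n) < u)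
    (f : ℝ → ℝ)
    (hf : ∀ s, f s = ∑ k : Fin n, if t k.castSucc ≤ s ∧ s < t k.succ then c k else 0) :
    ∫ ω, (∑ k : Fin n, c k *
        ((B (t k.succ) ω - t k.succ / u * B u ω)
          - (B (t k.castSucc) ω - t k.castSucc / u * B u ω))) ^ 2 ∂P
      = ∫ s in (0 : ℝ)..u, (f s - (1 / u) * ∫ r in (0 : ℝ)..u, f r) ^ 2 := by
  set g : ℕ → ℝ := Function.extend Fin.val t fun _ => u with hg_def
  set C : ℕ → ℝ := Function.extend Fin.val c 0 with hC_def
  have hg : Monotone g := monotone_extend_val ht.monotone htu.le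
  have hg0 : g 0 = 0 := (Fin.val_injective.extend_apply t _ 0).trans ht0
  have hgN : g (n + 1) = u := Function.extend_apply' _ _ _ fun ⟨a, ha⟩ => by omega
  have hfC : ∀ k < n + 1, EqOn f (fun _ => C k) (Ioo (g k) (g (k + 1))) := fun k hk s hs => by
    rw [hf, Fin.sum_univ_eq_sum_range_extend (fun x a b => if a ≤ s ∧ s < b then x else 0)
      (fun _ _ => ite_self 0) c t u]
    exact sum_ite_mem_Ico_eq hg C hk (Ioo_subset_Ico_self hs)
  have hm : (1 / u) * ∫ r in (0 : ℝ)..u, f r =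
      (∑ k ∈ Finset.range (n + 1), C k * (g (k + 1) - g k)) / u := by
    have := intervalIntegral_eq_sum_of_eqOn_Ioo hg hfC
    rw [hg0, hgN] at this
    rw [this, one_div_mul_eq_div]
  set m := (1 / u) * ∫ r in (0 : ℝ)..u, f r
  calc _ = ∫ ω, (∑ k ∈ Finset.range (n + 1), (C k - m) * (B (g (k + 1)) ω - B (g k) ω)) ^ 2 ∂P := by
        congr 1
        ext ω
        rw [Fin.sum_univ_eq_sum_range_extend
          (fun x a b => x * ((B b ω - b / u * B u ω) - (B a ω - a / u * B u ω)))
          (fun _ _ => zero_mul _) c t u, ← hg_def, ← hC_def, hm]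
        exact congrArg (· ^ 2)
          (sum_mul_bridge_increment_eq (b := fun s => B s ω) (by rw [hg0, hB.start]) hgN C)
    _ = ∑ k ∈ Finset.range (n + 1), (C k - m) ^ 2 * (g (k + 1) - g k) :=
        hB.integral_sq_sum_mul_sub hg0.ge hg _ _
    _ = _ := by
        have := intervalIntegral_eq_sum_of_eqOn_Ioo hg fun k hk s hs =>
          congrArg (fun x => (x - m) ^ 2) (hfC k hk hs)
        rwa [hg0, hgN, eq_comm] at this

/-- Itô isometry for the Brownian bridge: with the bridge
`X_s = B_s − (s/u) B_u` on `[0,u]` and a step function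
`f = Σ c_k 1_{[t_{k−1},t_k)}` with `0 = t₀ < ⋯ < tₙ < u`,
`E[(Σ c_k (X_{t_k} − X_{t_{k−1}}))²] = ∫₀^u |(π_u f)(s)|² ds` where
`(π_u f)(s) = f(s) − (1/u) ∫₀^u f`. -/
theorem integral_sq_wiener_integral_stepFun_brownianBridge
    {Ω : Type*} [MeasurableSpace Ω] (P : Measure Ω) (B : ℝ → Ω → ℝ)
    (hB : IsBrownianMotion P B) (u : ℝ) (hu : 0 < u)
    (n : ℕ) (c : Fin n → ℝ) (t : Fin (n + 1) → ℝ)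
    (ht0 : t 0 = 0) (ht : StrictMono t) (htu : t (Fin.last n) < u)
    (f : ℝ → ℝ)
    (hf : ∀ s, f s = ∑ k : Fin n, if t k.castSucc ≤ s ∧ s < t k.succ then c k else 0) :
    ∫ ω, (∑ k : Fin n, c k *
        ((B (t k.succ) ω - t k.succ / u * B u ω)
          - (B (t k.castSucc) ω - t k.castSucc / u * B u ω))) ^ 2 ∂P
      = ∫ s in (0 : ℝ)..u, (f s - (1 / u) * ∫ r in (0 : ℝ)..u, f r) ^ 2 :=
  integral_sq_wiener_integral_stepFun_brownianBridge_general P B hB u n c t ht0 ht htu f hf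
end
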